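/- Let X be a solution of the inviscid dyadic model on [0,T) with energy E, and let 0 ≤ s < t < T. If E(t) < E(s), then X(t) ∈ H_+, i.e. X_n(t) < 0 for at most finitely many n. In plain words: energy may decrease only in H_+. -/

import Mathlib

open MeasureTheory Set Filter Topology

/-- `X` is a solution of the inviscid dyadic model on the time set `D`
(typically `Set.Ico 0 T` or `Set.Ici 0`), with coefficients `k` bounded by `C * 2 ^ n`.
The components of the solution are `X 1, X 2, ...`; by convention `X 0 ≡ 0` and `k 0 = 0`. -/
def IsDyadicSolutionOn (C : ℝ) (k : ℕ → ℝ) (X : ℕ → ℝ → ℝ) (D : Set ℝ) : Prop :=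
  0 < C ∧ k 0 = 0 ∧
  (∀ n : ℕ, 1 ≤ n → 0 ≤ k n ∧ k n ≤ C * 2 ^ n) ∧
  (∀ t : ℝ, X 0 t = 0) ∧
  (∀ n : ℕ, 1 ≤ n → ∀ t ∈ D, HasDerivWithinAt (X n)
      (k (n - 1) * X (n - 1) t ^ 2 - k n * X n t * X (n + 1) t) D t) ∧
  (∀ t ∈ D, Summable fun j : ℕ => X (j + 1) t ^ 2)

/-- The energy `E(t) = ∑_{j ≥ 1} X_j(t)^2`. -/
noncomputable def energy (X : ℕ → ℝ → ℝ) (t : ℝ) : ℝ :=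
  ∑' j : ℕ, X (j + 1) t ^ 2

/-- The function `a(t) = sup_{n ≥ 1} (- k_n X_{n+1}(t))`. -/
noncomputable def classKfun (k : ℕ → ℝ) (X : ℕ → ℝ → ℝ) (t : ℝ) : ℝ :=
  ⨆ n : ℕ, -(k (n + 1) * X (n + 2) t)

/-- A solution is of class `K` if `a(t) = sup_{n ≥ 1} (- k_n X_{n+1}(t))` is locally
integrable on `[0,∞)`. -/
def IsClassK (k : ℕ → ℝ) (X : ℕ → ℝ → ℝ) : Prop :=
  LocallyIntegrableOn (classKfun k X) (Set.Ici 0)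

/-!
Since `X_n' ≥ (-k_n X_{n+1}) X_n`, an integrating factor shows that a component which is
nonnegative at some time stays nonnegative afterwards. Hence if `X_n(t) < 0`, then `X_n ≤ 0` on
`[s, t]`, and on that interval the partial energy `∑_{j<n} X_j²`, whose derivative telescopes to
`-2 k_{n-1} X_{n-1}² X_n`, is nondecreasing. If `X_n(t) < 0` for infinitely many `n`, every
partial sum of `E(s)` is therefore at most `E(t)`.
-/

theorem nonneg_of_hasDerivAt_ge_mul_self {f f' c : ℝ → ℝ} {a b : ℝ} (hab : a ≤ b)
    (hc : ContinuousOn c (Icc a b)) (hf : ContinuousOn f (Icc a b))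
    (hf' : ∀ x ∈ Ioo a b, HasDerivAt f (f' x) x) (hle : ∀ x ∈ Ioo a b, c x * f x ≤ f' x)
    (ha : 0 ≤ f a) : 0 ≤ f b := by
  -- extend `c` continuously to `ℝ`, so that its primitive is differentiable everywhere
  set c' : ℝ → ℝ := IccExtend hab ((Icc a b).domRestrict c)
  have hc' : Continuous c' := hc.domRestrict.Icc_extend'
  have hc'_eq : ∀ x ∈ Icc a b, c' x = c x := fun x hx => IccExtend_of_mem hab _ hx
  set F : ℝ → ℝ := fun x => ∫ y in a..x, c' y
  have hF : ∀ x, HasDerivAt F (c' x) x := fun x => (hc'.integral_hasStrictDerivAt a x).hasDerivAt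
  have hF_cont : Continuous F := continuous_iff_continuousAt.mpr fun x => (hF x).continuousAt
  set g : ℝ → ℝ := fun x => f x * Real.exp (-F x)
  set g' : ℝ → ℝ := fun x => (f' x - c x * f x) * Real.exp (-F x)
  have hg : ∀ x ∈ Ioo a b, HasDerivAt g (g' x) x := by
    intro x hx
    refine ((hf' x hx).mul (hF x).neg.exp).congr_deriv ?_
    rw [hc'_eq x (Ioo_subset_Icc_self hx), Pi.neg_apply]
    ring
  have hg_mono : MonotoneOn g (Icc a b) := by
    refine monotoneOn_of_hasDerivWithinAt_nonneg (f' := g') (convex_Icc a b)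
      (hf.mul hF_cont.neg.rexp.continuousOn) ?_ ?_ <;> rw [interior_Icc]
    · exact fun x hx => (hg x hx).hasDerivWithinAt
    · exact fun x hx => mul_nonneg (sub_nonneg.mpr (hle x hx)) (Real.exp_pos _).le
  have hgb : g a ≤ g b := hg_mono (left_mem_Icc.mpr hab) (right_mem_Icc.mpr hab) hab
  have hga : g a = f a := by simp [g, F]
  exact (mul_nonneg_iff_of_pos_right (Real.exp_pos _)).mp (ha.trans (hga ▸ hgb))

noncomputable def partialEnergy (X : ℕ → ℝ → ℝ) (m : ℕ) (t : ℝ) : ℝ :=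
  ∑ j ∈ Finset.range m, X (j + 1) t ^ 2

theorem partialEnergy_le_partialEnergy {X : ℕ → ℝ → ℝ} {m m' : ℕ} (h : m ≤ m') (t : ℝ) :
    partialEnergy X m t ≤ partialEnergy X m' t :=
  Finset.sum_le_sum_of_subset_of_nonneg (Finset.range_subset_range.mpr h)
    fun _ _ _ => sq_nonneg _

namespace IsDyadicSolutionOn

variable {C : ℝ} {k : ℕ → ℝ} {X : ℕ → ℝ → ℝ} {T : ℝ}

theorem coeff_nonneg (hX : IsDyadicSolutionOn C k X (Ico 0 T)) (n : ℕ) : 0 ≤ k n := by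
  rcases Nat.eq_zero_or_pos n with rfl | hn
  · exact hX.2.1.ge
  · exact (hX.2.2.1 n hn).1

theorem hasDerivAt (hX : IsDyadicSolutionOn C k X (Ico 0 T)) {n : ℕ} (hn : 1 ≤ n) {x : ℝ}
    (hx0 : 0 < x) (hxT : x < T) :
    HasDerivAt (X n) (k (n - 1) * X (n - 1) x ^ 2 - k n * X n x * X (n + 1) x) x :=
  (hX.2.2.2.2.1 n hn x ⟨hx0.le, hxT⟩).hasDerivAt (Ico_mem_nhds hx0 hxT)

theorem continuousOn (hX : IsDyadicSolutionOn C k X (Ico 0 T)) (n : ℕ) :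
    ContinuousOn (X n) (Ico 0 T) := by
  rcases Nat.eq_zero_or_pos n with rfl | hn
  · rw [show X 0 = fun _ => 0 from funext hX.2.2.2.1]
    exact continuousOn_const
  · exact fun x hx => (hX.2.2.2.2.1 n hn x hx).continuousWithinAt

theorem continuousOn_Icc (hX : IsDyadicSolutionOn C k X (Ico 0 T)) (n : ℕ) {a b : ℝ}
    (ha : 0 ≤ a) (hb : b < T) : ContinuousOn (X n) (Icc a b) :=
  (hX.continuousOn n).mono fun _ hx => ⟨ha.trans hx.1, hx.2.trans_lt hb⟩

theorem nonneg_of_nonneg (hX : IsDyadicSolutionOn C k X (Ico 0 T)) {n : ℕ} (hn : 1 ≤ n)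
    {a b : ℝ} (ha : 0 ≤ a) (hab : a ≤ b) (hb : b < T) (h : 0 ≤ X n a) : 0 ≤ X n b := by
  refine nonneg_of_hasDerivAt_ge_mul_self hab (c := fun x => -(k n * X (n + 1) x))
    ((hX.continuousOn_Icc (n + 1) ha hb).const_mul (k n)).neg (hX.continuousOn_Icc n ha hb)
    (fun x hx => hX.hasDerivAt hn (ha.trans_lt hx.1) (hx.2.trans hb)) (fun x _ => ?_) h
  have := mul_nonneg (hX.coeff_nonneg (n - 1)) (sq_nonneg (X (n - 1) x))
  linarith

theorem hasDerivAt_partialEnergy (hX : IsDyadicSolutionOn C k X (Ico 0 T)) (m : ℕ) {x : ℝ}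
    (hx0 : 0 < x) (hxT : x < T) :
    HasDerivAt (partialEnergy X m) (-(2 * k m * X m x ^ 2 * X (m + 1) x)) x := by
  set flux : ℕ → ℝ := fun j => 2 * k j * X j x ^ 2 * X (j + 1) x
  have hterm : ∀ j ∈ Finset.range m,
      HasDerivAt (fun τ => X (j + 1) τ ^ 2) (flux j - flux (j + 1)) x := fun j _ =>
    ((hX.hasDerivAt (Nat.le_add_left 1 j) hx0 hxT).fun_pow 2).congr_deriv (by
      simp only [flux, Nat.add_sub_cancel]
      ring)
  have htelescope : ∑ j ∈ Finset.range m, (flux j - flux (j + 1)) = -flux m := by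
    rw [Finset.sum_range_sub']
    simp [flux, hX.2.1]
  exact htelescope ▸ HasDerivAt.fun_sum hterm

theorem partialEnergy_le (hX : IsDyadicSolutionOn C k X (Ico 0 T)) {m : ℕ} {s t : ℝ}
    (hs : 0 ≤ s) (hst : s ≤ t) (ht : t < T) (hneg : ∀ τ ∈ Icc s t, X (m + 1) τ ≤ 0) :
    partialEnergy X m s ≤ partialEnergy X m t := by
  refine monotoneOn_of_hasDerivWithinAt_nonneg
    (f' := fun x => -(2 * k m * X m x ^ 2 * X (m + 1) x)) (convex_Icc s t)
    (continuousOn_finsetSum _ fun j _ => (hX.continuousOn_Icc (j + 1) hs ht).pow 2) ?_ ?_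
    (left_mem_Icc.mpr hst) (right_mem_Icc.mpr hst) hst <;> rw [interior_Icc]
  · exact fun x hx =>
      (hX.hasDerivAt_partialEnergy m (hs.trans_lt hx.1) (hx.2.trans ht)).hasDerivWithinAt
  · intro x hx
    have := mul_nonpos_of_nonneg_of_nonpos
      (mul_nonneg (mul_nonneg zero_le_two (hX.coeff_nonneg m)) (sq_nonneg (X m x)))
      (hneg x (Ioo_subset_Icc_self hx))
    linarith

theorem partialEnergy_le_energy (hX : IsDyadicSolutionOn C k X (Ico 0 T)) (m : ℕ) {t : ℝ}
    (ht : t ∈ Ico 0 T) : partialEnergy X m t ≤ energy X t :=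
  (hX.2.2.2.2.2 t ht).sum_le_tsum _ fun _ _ => sq_nonneg _

end IsDyadicSolutionOn

/-- energy may decrease only in `H₊`: if `E(t) < E(s)` then `X(t) ∈ H₊`. -/
theorem energy_decrease_only_in_Hplus
    (C : ℝ) (k : ℕ → ℝ) (X : ℕ → ℝ → ℝ) (T : ℝ)
    (hX : IsDyadicSolutionOn C k X (Set.Ico 0 T))
    (s t : ℝ) (hs : 0 ≤ s) (hst : s < t) (ht : t < T)
    (hE : energy X t < energy X s) :
    {n : ℕ | X n t < 0}.Finite := by
  by_contra hinf
  suffices energy X s ≤ energy X t by linarith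
  refine Real.tsum_le_of_sum_range_le (fun _ => sq_nonneg _) fun N => ?_
  obtain ⟨n, hn_neg, hNn⟩ := Set.Infinite.exists_gt hinf N
  obtain ⟨m, rfl⟩ := Nat.exists_eq_add_of_lt hNn
  have hX_nonpos : ∀ τ ∈ Icc s t, X (N + m + 1) τ ≤ 0 := fun τ hτ =>
    le_of_not_gt fun hpos => hn_neg.not_ge
      (hX.nonneg_of_nonneg (Nat.le_add_left 1 _) (hs.trans hτ.1) hτ.2 ht hpos.le)
  calc partialEnergy X N s
      ≤ partialEnergy X (N + m) s := partialEnergy_le_partialEnergy (Nat.le_add_right N m) s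
    _ ≤ partialEnergy X (N + m) t := hX.partialEnergy_le hs hst.le ht hX_nonpos
    _ ≤ energy X t := hX.partialEnergy_le_energy _ ⟨hs.trans hst.le, ht⟩
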